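/- Let ξ be a root of unity with ξ^d = 1 for a positive integer d, let χ : ℤ → ℂ be a Dirichlet character of conductor d, and define the generalized twisted Bernoulli polynomials B_{n,χ,ξ}(x) by the generating function (t·∑_{a=0}^{d−1} χ(a) ξ^a e^{at})/(ξ^d e^{dt} − 1) · e^{xt} = ∑_{n≥0} B_{n,χ,ξ}(x) t^n/n!. Then for every n ≥ 1 and every positive integer N, ξ^{Nd} B_{n,χ,ξ}(Nd) − B_{n,χ,ξ}(0) = n · ∑_{l=0}^{Nd−1} χ(l) ξ^l l^{n−1}. -/

import Mathlib

/-- `e^{at}` as a formal power series over `ℂ`. -/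
noncomputable def expS (a : ℂ) : PowerSeries ℂ :=
  PowerSeries.mk fun n => a ^ n / n.factorial

lemma expS_eq (a : ℂ) : expS a = PowerSeries.rescale a (PowerSeries.exp ℂ) := by
  ext n
  simp [expS, PowerSeries.coeff_rescale, PowerSeries.coeff_exp, div_eq_mul_inv]

lemma expS_mul (a b : ℂ) : expS a * expS b = expS (a + b) := by
  rw [expS_eq, expS_eq, expS_eq, PowerSeries.exp_mul_exp_eq_exp_add]

lemma expS_zero : expS (0 : ℂ) = 1 := by
  ext n
  simp [expS, PowerSeries.coeff_one]
  rcases n with _ | n <;> simp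

lemma expS_pow (a : ℂ) (N : ℕ) : expS a ^ N = expS (N * a) := by
  induction N with
  | zero => simp [expS_zero]
  | succ k ih =>
      rw [pow_succ, ih, expS_mul]
      push_cast
      ring_nf

lemma sum_range_mul' {M : Type*} [AddCommMonoid M] (f : ℕ → M) (N d : ℕ) :
    ∑ l ∈ Finset.range (N * d), f l
      = ∑ k ∈ Finset.range N, ∑ a ∈ Finset.range d, f (a + k * d) := by
  induction N with
  | zero => simp
  | succ k ih =>
      rw [Nat.succ_mul, Finset.sum_range_add, ih, Finset.sum_range_succ]
      simp [Nat.add_comm]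

theorem generalized_twisted_bernoulli_power_sum
    (d : ℕ) (hd : 0 < d) (ξ : ℂ) (hξ : ξ ^ d = 1)
    (χ : DirichletCharacter ℂ d) (B : ℕ → ℂ → ℂ)
    (hB : ∀ x : ℂ,
      (PowerSeries.mk fun n => B n x / n.factorial) *
          (PowerSeries.C (R := ℂ) (ξ ^ d) * expS d - 1) =
        PowerSeries.X *
          (∑ a ∈ Finset.range d, PowerSeries.C (R := ℂ) (χ (a : ZMod d) * ξ ^ a) * expS a) * expS x)
    (n N : ℕ) (hn : 1 ≤ n) (hN : 1 ≤ N) :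
    ξ ^ (N * d) * B n ((N * d : ℕ) : ℂ) - B n 0 =
      n * ∑ l ∈ Finset.range (N * d), χ (l : ZMod d) * ξ ^ l * (l : ℂ) ^ (n - 1) := by
  classical
  set S : PowerSeries ℂ :=
    ∑ a ∈ Finset.range d, PowerSeries.C (R := ℂ) (χ (a : ZMod d) * ξ ^ a) * expS a with hS
  set E : PowerSeries ℂ := expS (d : ℂ) - 1 with hEdef
  have hB' : ∀ x : ℂ,
      (PowerSeries.mk fun m => B m x / m.factorial) * E = PowerSeries.X * S * expS x := by
    intro x
    have := hB x
    rwa [hξ, map_one, one_mul] at this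
  have hEne : E ≠ 0 := by
    intro h
    have h1 := congrArg (PowerSeries.coeff (R := ℂ) 1) h
    simp [hEdef, expS, PowerSeries.coeff_one] at h1
    exact hd.ne' (by exact_mod_cast h1)
  set G : PowerSeries ℂ := ∑ k ∈ Finset.range N, (expS (d : ℂ)) ^ k with hG
  have hGE : G * E = expS ((N * d : ℕ) : ℂ) - 1 := by
    rw [hG, hEdef, geom_sum_mul, expS_pow]
    push_cast
    ring_nf
  have hSG : S * G =
      ∑ l ∈ Finset.range (N * d), PowerSeries.C (R := ℂ) (χ (l : ZMod d) * ξ ^ l) * expS l := by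
    rw [hS, hG, Finset.sum_mul_sum,
      sum_range_mul' (fun l => PowerSeries.C (R := ℂ) (χ (l : ZMod d) * ξ ^ l) * expS l) N d,
      Finset.sum_comm]
    refine Finset.sum_congr rfl fun k _ => Finset.sum_congr rfl fun a _ => ?_
    have h1 : ((a + k * d : ℕ) : ZMod d) = (a : ZMod d) := by
      push_cast [ZMod.natCast_self]
      ring
    have h2 : ξ ^ (a + k * d) = ξ ^ a := by
      rw [pow_add, mul_comm k d, pow_mul, hξ, one_pow, mul_one]
    have h3 : expS a * expS (d : ℂ) ^ k = expS ((a + k * d : ℕ) : ℂ) := by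
      rw [expS_pow, expS_mul]
      push_cast
      ring_nf
    rw [h1, h2, ← h3]
    ring
  have key : (PowerSeries.mk fun m => B m ((N * d : ℕ) : ℂ) / m.factorial)
      - (PowerSeries.mk fun m => B m 0 / m.factorial)
      = PowerSeries.X *
        ∑ l ∈ Finset.range (N * d), PowerSeries.C (R := ℂ) (χ (l : ZMod d) * ξ ^ l) * expS l := by
    apply mul_right_cancel₀ hEne
    rw [sub_mul, hB', hB', ← hSG]
    have : PowerSeries.X * (S * G) * E = PowerSeries.X * S * (G * E) := by ring
    rw [this, hGE, expS_zero, mul_one, mul_sub, mul_one]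
  obtain ⟨m, rfl⟩ : ∃ m, n = m + 1 := ⟨n - 1, (Nat.succ_pred_eq_of_pos hn).symm⟩
  have hc := congrArg (PowerSeries.coeff (R := ℂ) (m + 1)) key
  simp only [map_sub, PowerSeries.coeff_mk, PowerSeries.coeff_succ_X_mul, map_sum,
    PowerSeries.coeff_C_mul, expS, PowerSeries.coeff_mk] at hc
  have hξNd : ξ ^ (N * d) = 1 := by
    rw [mul_comm, pow_mul, hξ, one_pow]
  rw [hξNd, one_mul, Nat.add_sub_cancel]
  have hfac : ((m + 1).factorial : ℂ) ≠ 0 := by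
    exact_mod_cast (Nat.factorial_pos (m + 1)).ne'
  have hfacm : ((m).factorial : ℂ) ≠ 0 := by
    exact_mod_cast (Nat.factorial_pos m).ne'
  calc B (m + 1) ((N * d : ℕ) : ℂ) - B (m + 1) 0
      = (B (m + 1) ((N * d : ℕ) : ℂ) / (m + 1).factorial
          - B (m + 1) 0 / (m + 1).factorial) * (m + 1).factorial := by
        field_simp
    _ = (∑ l ∈ Finset.range (N * d),
          χ (l : ZMod d) * ξ ^ l * ((l : ℂ) ^ m / m.factorial)) * (m + 1).factorial := by
        rw [hc]
    _ = ((m : ℂ) + 1) * ∑ l ∈ Finset.range (N * d),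
          χ (l : ZMod d) * ξ ^ l * (l : ℂ) ^ m := by
        rw [Finset.sum_mul, Finset.mul_sum]
        refine Finset.sum_congr rfl fun l _ => ?_
        rw [Nat.factorial_succ]
        push_cast
        field_simp
    _ = ((m + 1 : ℕ) : ℂ) * ∑ l ∈ Finset.range (N * d),
          χ (l : ZMod d) * ξ ^ l * (l : ℂ) ^ m := by push_cast; ring
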